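/- arXiv:2408.16626 — 3 statements merged into one kernel-verified Lean document; each statement's English description precedes it below -/
import Mathlib

section
/- Let d ≥ 1, let π be a probability density on ℝ^d (the prior for μ₀), and suppose the conditional density of x given μ₀ has the exponential-family form p(x | μ₀) = p₀(x) · exp(⟨μ₀, F(x)⟩ − φ(μ₀)), where p₀ : ℝ^d → (0,∞) and F : ℝ^d → ℝ^d are differentiable at a point x, and φ : ℝ^d → ℝ normalizes the density. Let p(x) = ∫ π(μ₀) p(x | μ₀) dμ₀ be the marginal density, assume p(x) > 0, assume ∫ ‖μ₀‖ π(μ₀) p(x | μ₀) dμ₀ < ∞ so the posterior mean μ̄₀(x) = (1/p(x)) ∫ μ₀ π(μ₀) p(x | μ₀) dμ₀ is well defined, and assume differentiation under the integral sign is valid at x (i.e., there is a neighbourhood of x and an integrable dominating function for the μ₀-indexed family of gradients ∇_x [π(μ₀) p(· | μ₀)]). Then p is differentiable at x and (DF(x))* μ̄₀(x) = ∇ log p(x) − ∇ log p₀(x), where DF(x) is the Fréchet derivative of F at x and (DF(x))* its adjoint. -/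
/-!
Differentiating the marginal under the integral sign, the `x`-gradient of `π(μ₀) p(x | μ₀)`
is that same density times the conditional score `∇ log p₀(x) + DF(x)* μ₀`. Integrating over
`μ₀` gives `∇p(x) = p(x) (∇ log p₀(x) + DF(x)* μ̄₀(x))`; dividing by `p(x)` gives the formula.
-/

open MeasureTheory

noncomputable section

open InnerProductSpace Metric Filter Topology
open scoped RealInnerProductSpace

section Gradient

variable {E : Type*} [NormedAddCommGroup E] [InnerProductSpace ℝ E] [CompleteSpace E]
  {f g : E → ℝ} {f' g' x : E}

theorem toDual_real_smul (c : ℝ) (v : E) : toDual ℝ E (c • v) = c • toDual ℝ E v := by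
  simp

theorem HasDerivAt.comp_hasGradientAt {h : ℝ → ℝ} {h' : ℝ} (hh : HasDerivAt h h' (f x))
    (hf : HasGradientAt f f' x) : HasGradientAt (h ∘ f) (h' • f') x := by
  rw [hasGradientAt_iff_hasFDerivAt, toDual_real_smul]
  exact hh.comp_hasFDerivAt x hf.hasFDerivAt

theorem HasGradientAt.log (hf : HasGradientAt f f' x) (hx : f x ≠ 0) :
    HasGradientAt (fun y => Real.log (f y)) ((f x)⁻¹ • f') x :=
  (Real.hasDerivAt_log hx).comp_hasGradientAt hf

theorem HasGradientAt.exp (hf : HasGradientAt f f' x) :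
    HasGradientAt (fun y => Real.exp (f y)) (Real.exp (f x) • f') x :=
  (Real.hasDerivAt_exp (f x)).comp_hasGradientAt hf

theorem HasGradientAt.mul (hf : HasGradientAt f f' x) (hg : HasGradientAt g g' x) :
    HasGradientAt (fun y => f y * g y) (f x • g' + g x • f') x := by
  rw [hasGradientAt_iff_hasFDerivAt, map_add, toDual_real_smul, toDual_real_smul]
  exact hf.hasFDerivAt.mul hg.hasFDerivAt

theorem HasGradientAt.const_mul (c : ℝ) (hf : HasGradientAt f f' x) :
    HasGradientAt (fun y => c * f y) (c • f') x := by
  rw [hasGradientAt_iff_hasFDerivAt, toDual_real_smul]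
  exact hf.hasFDerivAt.const_mul c

theorem HasGradientAt.sub_const (c : ℝ) (hf : HasGradientAt f f' x) :
    HasGradientAt (fun y => f y - c) f' x :=
  hf.hasFDerivAt.sub_const c

theorem HasFDerivAt.hasGradientAt_inner_left {H : Type*} [NormedAddCommGroup H]
    [InnerProductSpace ℝ H] [CompleteSpace H] {F : E → H} {F' : E →L[ℝ] H}
    (hF : HasFDerivAt F F' x) (a : H) :
    HasGradientAt (fun y => ⟪a, F y⟫) (F'.adjoint a) x := by
  rw [hasGradientAt_iff_hasFDerivAt]
  refine ((innerSL ℝ a).hasFDerivAt.comp x hF).congr_fderiv ?_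
  ext v
  simp [ContinuousLinearMap.adjoint_inner_left]

theorem hasGradientAt_integral_of_dominated_of_gradient_le {α : Type*} [MeasurableSpace α]
    {μ : Measure α} {f : α → E → ℝ} {f' : α → E → E} {bound : α → ℝ} {ε : ℝ} (hε : 0 < ε)
    (hf_meas : ∀ᶠ y in 𝓝 x, AEStronglyMeasurable (fun a => f a y) μ)
    (hf_int : Integrable (fun a => f a x) μ)
    (hf'_meas : AEStronglyMeasurable (fun a => f' a x) μ)
    (h_bound : ∀ᵐ a ∂μ, ∀ y ∈ ball x ε, ‖f' a y‖ ≤ bound a)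
    (bound_integrable : Integrable bound μ)
    (h_diff : ∀ᵐ a ∂μ, ∀ y ∈ ball x ε, HasGradientAt (f a) (f' a y) y) :
    HasGradientAt (fun y => ∫ a, f a y ∂μ) (∫ a, f' a x ∂μ) x := by
  rw [hasGradientAt_iff_hasFDerivAt]
  refine (hasFDerivAt_integral_of_dominated_of_fderiv_le
    (F' := fun y a => toDual ℝ E (f' a y)) (ball_mem_nhds x hε) hf_meas hf_int
    ((toDual ℝ E).continuous.comp_aestronglyMeasurable hf'_meas) ?_ bound_integrable
    ?_).congr_fderiv ((toDual ℝ E).toLinearIsometry.integral_comp_comm _)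
  · filter_upwards [h_bound] with a ha y hy
    simpa using ha y hy
  · filter_upwards [h_diff] with a ha y hy
    exact (ha y hy).hasFDerivAt

end Gradient

section ExponentialFamily

variable {E H : Type*} [NormedAddCommGroup H] [InnerProductSpace ℝ H]
  {p₀ : E → ℝ} {F : E → H} {φ : H → ℝ} {x : E}

def expFamilyDensity (p₀ : E → ℝ) (F : E → H) (φ : H → ℝ) (y : E) (a : H) : ℝ :=
  p₀ y * Real.exp (⟪a, F y⟫ - φ a)

theorem hasGradientAt_expFamilyDensity [NormedAddCommGroup E] [InnerProductSpace ℝ E]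
    [CompleteSpace E] [CompleteSpace H] {g₀ : E} {F' : E →L[ℝ] H} (hp₀ : HasGradientAt p₀ g₀ x)
    (hp₀x : p₀ x ≠ 0) (hF : HasFDerivAt F F' x) (a : H) :
    HasGradientAt (fun y => expFamilyDensity p₀ F φ y a)
      (expFamilyDensity p₀ F φ x a • ((p₀ x)⁻¹ • g₀ + F'.adjoint a)) x := by
  unfold expFamilyDensity
  convert hp₀.mul ((hF.hasGradientAt_inner_left a).sub_const (φ a)).exp using 1
  match_scalars <;> field_simp

theorem expFamilyDensity_eq_mul_tilt (hp₀x : p₀ x ≠ 0) (y : E) (a : H) :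
    expFamilyDensity p₀ F φ y a
      = expFamilyDensity p₀ F φ x a * (p₀ y / p₀ x * Real.exp ⟪a, F y - F x⟫) := by
  simp only [expFamilyDensity, inner_sub_right]
  rw [show ⟪a, F y⟫ - φ a = (⟪a, F x⟫ - φ a) + (⟪a, F y⟫ - ⟪a, F x⟫) by ring, Real.exp_add]
  field_simp

variable [MeasurableSpace H] [OpensMeasurableSpace H] {μ : Measure H}

-- `φ` need not be measurable: measurability in `a` is carried from `x` to `y` by the
-- continuous tilt factor.
theorem MeasureTheory.AEStronglyMeasurable.mul_expFamilyDensity {π : H → ℝ}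
    (h : AEStronglyMeasurable (fun a => π a * expFamilyDensity p₀ F φ x a) μ) (hp₀x : p₀ x ≠ 0)
    (y : E) : AEStronglyMeasurable (fun a => π a * expFamilyDensity p₀ F φ y a) μ := by
  have h_tilt : Continuous fun a => p₀ y / p₀ x * Real.exp ⟪a, F y - F x⟫ := by fun_prop
  refine (h.mul h_tilt.aestronglyMeasurable).congr (ae_of_all _ fun a => ?_)
  simp only [Pi.mul_apply, expFamilyDensity_eq_mul_tilt hp₀x y a]
  ring

end ExponentialFamily

section Integrals

variable {E H : Type*} [NormedAddCommGroup H] [NormedSpace ℝ H] [MeasurableSpace H]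
  {μ : Measure H} {w : H → ℝ}

theorem integrable_smul_self_of_integrable_norm_mul [BorelSpace H] [SecondCountableTopology H]
    (hw : AEStronglyMeasurable w μ) (h : Integrable (fun a => ‖a‖ * w a) μ) :
    Integrable (fun a => w a • a) μ := by
  refine h.norm.mono' (hw.smul aestronglyMeasurable_id) (ae_of_all _ fun a => ?_)
  rw [norm_smul, norm_mul, norm_norm, mul_comm]

theorem integral_smul_add_apply [NormedAddCommGroup E] [NormedSpace ℝ E] [CompleteSpace E]
    [CompleteSpace H] (hw : Integrable w μ) (hwa : Integrable (fun a => w a • a) μ)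
    (v : E) (L : H →L[ℝ] E) :
    ∫ a, w a • (v + L a) ∂μ = (∫ a, w a ∂μ) • v + L (∫ a, w a • a ∂μ) := by
  simp_rw [smul_add, ← L.map_smul]
  rw [integral_add (hw.smul_const v) (L.integrable_comp hwa), integral_smul_const,
    L.integral_comp_comm hwa]

end Integrals

theorem tweedie_formula_general
    (d : ℕ)
    (π p₀ φ : EuclideanSpace ℝ (Fin d) → ℝ)
    (F : EuclideanSpace ℝ (Fin d) → EuclideanSpace ℝ (Fin d))
    (x : EuclideanSpace ℝ (Fin d))
    -- the exponential-family conditional density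
    (pcond : EuclideanSpace ℝ (Fin d) → EuclideanSpace ℝ (Fin d) → ℝ)
    (hpcond : ∀ x' μ₀, pcond x' μ₀
      = p₀ x' * Real.exp ((inner ℝ μ₀ (F x') : ℝ) - φ μ₀))
    (hp₀_pos : ∀ x', 0 < p₀ x')
    (hp₀_diff : DifferentiableAt ℝ p₀ x)
    (hF_diff : DifferentiableAt ℝ F x)
    -- the marginal density, positive at `x`
    (p : EuclideanSpace ℝ (Fin d) → ℝ)
    (hp : ∀ x', p x' = ∫ μ₀, π μ₀ * pcond x' μ₀)
    (hp_pos : 0 < p x)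
    -- integrability of the first moment, so the posterior mean is well defined
    (h_mom : Integrable (fun μ₀ => ‖μ₀‖ * (π μ₀ * pcond x μ₀)))
    (μbar₀ : EuclideanSpace ℝ (Fin d))
    (hμbar₀ : μbar₀ = (p x)⁻¹ • ∫ μ₀, (π μ₀ * pcond x μ₀) • μ₀)
    -- differentiation under the integral sign is valid at `x`
    (h_dui : ∃ ε > (0 : ℝ), ∃ bound : EuclideanSpace ℝ (Fin d) → ℝ,
      Integrable bound ∧
      ∀ μ₀, ∀ x' ∈ Metric.ball x ε,
        HasGradientAt (fun x'' => π μ₀ * pcond x'' μ₀)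
          (gradient (fun x'' => π μ₀ * pcond x'' μ₀) x') x' ∧
        ‖gradient (fun x'' => π μ₀ * pcond x'' μ₀) x'‖ ≤ bound μ₀) :
    DifferentiableAt ℝ p x ∧
      (ContinuousLinearMap.adjoint (fderiv ℝ F x)) μbar₀
        = gradient (fun x' => Real.log (p x')) x
          - gradient (fun x' => Real.log (p₀ x')) x := by
  obtain rfl : pcond = expFamilyDensity p₀ F φ := funext₂ hpcond
  obtain ⟨ε, hε, bound, hbound_int, h_grad_bound⟩ := h_dui
  set w := fun a => π a * expFamilyDensity p₀ F φ x a
  set G := (fderiv ℝ F x).adjoint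
  have hp₀x := (hp₀_pos x).ne'
  have h_score₀ := hp₀_diff.hasGradientAt.log hp₀x
  set s₀ := (p₀ x)⁻¹ • gradient p₀ x
  have hw_int : Integrable w := Integrable.of_integral_ne_zero (hp x ▸ hp_pos.ne')
  have hwa_int : Integrable (fun a => w a • a) :=
    integrable_smul_self_of_integrable_norm_mul hw_int.aestronglyMeasurable h_mom
  have h_grad (a) :
      HasGradientAt (fun y => π a * expFamilyDensity p₀ F φ y a) (w a • (s₀ + G a)) x := by
    simpa only [smul_smul] using ((hasGradientAt_expFamilyDensity hp₀_diff.hasGradientAt hp₀x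
      hF_diff.hasFDerivAt a).const_mul (π a))
  have h_grad_eq : (fun a => gradient (fun y => π a * expFamilyDensity p₀ F φ y a) x)
      = fun a => w a • (s₀ + G a) := funext fun a => (h_grad a).gradient
  have h_mean : ∫ a, w a • a = p x • μbar₀ := by
    rw [hμbar₀, smul_smul, mul_inv_cancel₀ hp_pos.ne', one_smul]
  have h_grad_p : HasGradientAt p (p x • (s₀ + G μbar₀)) x := by
    have h_meas : AEStronglyMeasurable (fun a => w a • (s₀ + G a)) :=
      hw_int.aestronglyMeasurable.smul (G.continuous.const_add s₀).aestronglyMeasurable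
    have h_int := hasGradientAt_integral_of_dominated_of_gradient_le hε
      (Eventually.of_forall (hw_int.aestronglyMeasurable.mul_expFamilyDensity hp₀x)) hw_int
      (h_grad_eq ▸ h_meas) (ae_of_all _ fun a y hy => (h_grad_bound a y hy).2) hbound_int
      (ae_of_all _ fun a y hy => (h_grad_bound a y hy).1)
    rwa [h_grad_eq, integral_smul_add_apply hw_int hwa_int, h_mean, ← hp x, G.map_smul,
      ← smul_add, ← funext hp] at h_int
  refine ⟨h_grad_p.differentiableAt, ?_⟩
  rw [(h_grad_p.log hp_pos.ne').gradient, h_score₀.gradient, smul_smul,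
    inv_mul_cancel₀ hp_pos.ne', one_smul, add_sub_cancel_left]

/-- **Tweedie's formula for exponential families.** Given a prior density `π` on `ℝ^d` and an
exponential-family conditional density `p(x|μ₀) = p₀(x) exp(⟨μ₀, F(x)⟩ − φ(μ₀))`, with marginal
`p(x) = ∫ π(μ₀) p(x|μ₀) dμ₀ > 0`, integrable first posterior moment, and differentiation under
the integral sign valid at `x`, the marginal `p` is differentiable at `x` and the posterior
mean `μ̄₀(x)` satisfies `(DF(x))* μ̄₀(x) = ∇ log p(x) − ∇ log p₀(x)`. -/
theorem tweedie_formula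
    (d : ℕ) (hd : 1 ≤ d)
    (π p₀ φ : EuclideanSpace ℝ (Fin d) → ℝ)
    (F : EuclideanSpace ℝ (Fin d) → EuclideanSpace ℝ (Fin d))
    (x : EuclideanSpace ℝ (Fin d))
    -- `π` is a probability density
    (hπ_meas : Measurable π) (hπ_nonneg : ∀ μ₀, 0 ≤ π μ₀)
    (hπ_int : ∫ μ₀, π μ₀ = 1)
    -- the exponential-family conditional density
    (pcond : EuclideanSpace ℝ (Fin d) → EuclideanSpace ℝ (Fin d) → ℝ)
    (hpcond : ∀ x' μ₀, pcond x' μ₀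
      = p₀ x' * Real.exp ((inner ℝ μ₀ (F x') : ℝ) - φ μ₀))
    (hp₀_pos : ∀ x', 0 < p₀ x')
    (hp₀_diff : DifferentiableAt ℝ p₀ x)
    (hF_diff : DifferentiableAt ℝ F x)
    -- the marginal density, positive at `x`
    (p : EuclideanSpace ℝ (Fin d) → ℝ)
    (hp : ∀ x', p x' = ∫ μ₀, π μ₀ * pcond x' μ₀)
    (hp_pos : 0 < p x)
    -- integrability of the first moment, so the posterior mean is well defined
    (h_mom : Integrable (fun μ₀ => ‖μ₀‖ * (π μ₀ * pcond x μ₀)))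
    (μbar₀ : EuclideanSpace ℝ (Fin d))
    (hμbar₀ : μbar₀ = (p x)⁻¹ • ∫ μ₀, (π μ₀ * pcond x μ₀) • μ₀)
    -- differentiation under the integral sign is valid at `x`
    (h_dui : ∃ ε > (0 : ℝ), ∃ bound : EuclideanSpace ℝ (Fin d) → ℝ,
      Integrable bound ∧
      ∀ μ₀, ∀ x' ∈ Metric.ball x ε,
        HasGradientAt (fun x'' => π μ₀ * pcond x'' μ₀)
          (gradient (fun x'' => π μ₀ * pcond x'' μ₀) x') x' ∧
        ‖gradient (fun x'' => π μ₀ * pcond x'' μ₀) x'‖ ≤ bound μ₀) :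
    DifferentiableAt ℝ p x ∧
      (ContinuousLinearMap.adjoint (fderiv ℝ F x)) μbar₀
        = gradient (fun x' => Real.log (p x')) x
          - gradient (fun x' => Real.log (p₀ x')) x :=
  tweedie_formula_general d π p₀ φ F x pcond hpcond hp₀_pos hp₀_diff hF_diff p hp hp_pos h_mom μbar₀
    hμbar₀ h_dui
end
end

section
/- Let d ≥ 1, let p : ℝ^d → ℝ be a continuously differentiable probability density with p(x) > 0 for all x, such that x ↦ ‖∇ log p(x)‖² p(x) is integrable, and let s : ℝ^d → ℝ^d be a continuously differentiable vector field with compact support. Then ∫ ‖s(x) − ∇ log p(x)‖² p(x) dx = ∫ (‖s(x)‖² + 2 div s(x)) p(x) dx + ∫ ‖∇ log p(x)‖² p(x) dx, where div s = Σᵢ ∂sᵢ/∂xᵢ. -/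
/-!
Expanding the square and using `p ∇log p = ∇p` gives
`‖s − ∇log p‖² p = ‖s‖² p − 2 ⟪s, ∇p⟫ + ‖∇log p‖² p`, and `⟪s, ∇p⟫ = div (p s) − p div s`.
The field `p s` is `C¹` with compact support, so each `∂ᵢ (p s)ᵢ` integrates to zero
(integration by parts against the constant `1`), hence `∫ div (p s) = 0`.
-/

open MeasureTheory

noncomputable section

def divergence (d : ℕ) (s : EuclideanSpace ℝ (Fin d) → EuclideanSpace ℝ (Fin d))
    (x : EuclideanSpace ℝ (Fin d)) : ℝ :=
  ∑ i, fderiv ℝ s x (EuclideanSpace.single i 1) i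

theorem inner_gradient_log_mul {E : Type*} [NormedAddCommGroup E] [InnerProductSpace ℝ E]
    [CompleteSpace E] {p : E → ℝ} {x : E} (hp : DifferentiableAt ℝ p x) (hpx : p x ≠ 0)
    (v : E) : inner ℝ v (gradient (fun y => Real.log (p y)) x) * p x = fderiv ℝ p x v := by
  rw [inner_gradient_right, fderiv.log hp hpx, smul_apply, smul_eq_mul,
    RCLike.conj_to_real]
  field_simp

theorem HasCompactSupport.integral_fderiv_apply_eq_zero {E F : Type*} [NormedAddCommGroup E]
    [NormedSpace ℝ E] [FiniteDimensional ℝ E] [MeasurableSpace E] [BorelSpace E]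
    [NormedAddCommGroup F] [NormedSpace ℝ F] [CompleteSpace F]
    (μ : Measure E) [μ.IsAddHaarMeasure] {f : E → F}
    (hf : ContDiff ℝ 1 f) (hf_supp : HasCompactSupport f) (v : E) :
    ∫ x, fderiv ℝ f x v ∂μ = 0 := by
  have hf' : Continuous fun x => fderiv ℝ f x v :=
    (hf.continuous_fderiv one_ne_zero).clm_apply continuous_const
  have key := integral_smul_fderiv_eq_neg_fderiv_smul_of_integrable (μ := μ)
    (f := fun _ => (1 : ℝ)) (g := f) (v := v) (by simp)
    (by simpa using hf'.integrable_of_hasCompactSupport (hf_supp.fderiv_apply ℝ v))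
    (by simpa using hf.continuous.integrable_of_hasCompactSupport hf_supp)
    (fun _ _ => differentiableAt_const _) (fun x _ => hf.differentiable one_ne_zero x)
  simpa using key

variable {d : ℕ} {s : EuclideanSpace ℝ (Fin d) → EuclideanSpace ℝ (Fin d)}

theorem ContDiff.continuous_divergence (hs : ContDiff ℝ 1 s) : Continuous (divergence d s) :=
  continuous_finsetSum _ fun i _ => (EuclideanSpace.proj i).continuous.comp
    ((hs.continuous_fderiv one_ne_zero).clm_apply continuous_const)

theorem HasCompactSupport.divergence (hs : HasCompactSupport s) :
    HasCompactSupport (divergence d s) :=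
  (hs.fderiv ℝ).comp_left
    (g := fun L : EuclideanSpace ℝ (Fin d) →L[ℝ] EuclideanSpace ℝ (Fin d) =>
      ∑ i, L (EuclideanSpace.single i 1) i) (by simp)

theorem integrable_divergence (hs : ContDiff ℝ 1 s) (hs_supp : HasCompactSupport s) :
    Integrable (divergence d s) :=
  hs.continuous_divergence.integrable_of_hasCompactSupport hs_supp.divergence

theorem integral_divergence_eq_zero (hs : ContDiff ℝ 1 s) (hs_supp : HasCompactSupport s) :
    ∫ x, divergence d s x = 0 := by
  have hderiv_int : ∀ i, Integrable fun x => fderiv ℝ s x (EuclideanSpace.single i 1) :=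
    fun i => ((hs.continuous_fderiv one_ne_zero).clm_apply continuous_const)
      |>.integrable_of_hasCompactSupport (hs_supp.fderiv_apply ℝ _)
  have hcoord : ∀ i, ∫ x, fderiv ℝ s x (EuclideanSpace.single i 1) i = 0 := fun i => by
    have := (EuclideanSpace.proj (𝕜 := ℝ) i).integral_comp_comm (hderiv_int i)
    rwa [hs_supp.integral_fderiv_apply_eq_zero volume hs, map_zero] at this
  simp only [divergence]
  rw [integral_finsetSum _ fun i _ => ?_]
  · exact Finset.sum_eq_zero fun i _ => hcoord i
  · exact (EuclideanSpace.proj (𝕜 := ℝ) i).integrable_comp (hderiv_int i)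

theorem divergence_smul {p : EuclideanSpace ℝ (Fin d) → ℝ} {x : EuclideanSpace ℝ (Fin d)}
    (hp : DifferentiableAt ℝ p x) (hs : DifferentiableAt ℝ s x) :
    divergence d (fun y => p y • s y) x = fderiv ℝ p x (s x) + p x * divergence d s x := by
  have hsx : ∑ i, s x i • EuclideanSpace.single i (1 : ℝ) = s x := by
    simpa [EuclideanSpace.basisFun_apply, EuclideanSpace.basisFun_repr]
      using (EuclideanSpace.basisFun (Fin d) ℝ).sum_repr (s x)
  conv_rhs => rw [← hsx]
  simp only [divergence, fderiv_fun_smul hp hs, map_sum, map_smul, Finset.mul_sum,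
    ← Finset.sum_add_distrib]
  refine Finset.sum_congr rfl fun i _ => ?_
  simp only [add_apply, smul_apply, ContinuousLinearMap.smulRight_apply, PiLp.add_apply,
    PiLp.smul_apply, smul_eq_mul]
  ring

theorem sq_norm_sub_gradient_log_mul {p : EuclideanSpace ℝ (Fin d) → ℝ}
    {x : EuclideanSpace ℝ (Fin d)} (hp : DifferentiableAt ℝ p x) (hpx : p x ≠ 0)
    (hs : DifferentiableAt ℝ s x) :
    ‖s x - gradient (fun y => Real.log (p y)) x‖ ^ 2 * p x
      = (‖s x‖ ^ 2 + 2 * divergence d s x) * p x - 2 * divergence d (fun y => p y • s y) x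
        + ‖gradient (fun y => Real.log (p y)) x‖ ^ 2 * p x := by
  rw [divergence_smul hp hs, ← inner_gradient_log_mul hp hpx, norm_sub_sq_real]
  ring

theorem implicit_score_matching_general
    (d : ℕ)
    (p : EuclideanSpace ℝ (Fin d) → ℝ)
    (hp_smooth : ContDiff ℝ 1 p) (hp_pos : ∀ x, 0 < p x)
    (h_score_int :
      Integrable (fun x => ‖gradient (fun y => Real.log (p y)) x‖ ^ 2 * p x))
    (s : EuclideanSpace ℝ (Fin d) → EuclideanSpace ℝ (Fin d))
    (hs_smooth : ContDiff ℝ 1 s) (hs_supp : HasCompactSupport s) :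
    ∫ x, ‖s x - gradient (fun y => Real.log (p y)) x‖ ^ 2 * p x
      = (∫ x, (‖s x‖ ^ 2 + 2 * divergence d s x) * p x)
        + ∫ x, ‖gradient (fun y => Real.log (p y)) x‖ ^ 2 * p x := by
  have hps_smooth : ContDiff ℝ 1 fun y => p y • s y := hp_smooth.smul hs_smooth
  have hps_supp : HasCompactSupport fun y => p y • s y := hs_supp.smul_left (f := p)
  have hsdiv_cont : Continuous fun x => (‖s x‖ ^ 2 + 2 * divergence d s x) * p x :=
    ((hs_smooth.continuous.norm.pow 2).add
      (continuous_const.mul hs_smooth.continuous_divergence)).mul hp_smooth.continuous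
  have hsdiv_supp : HasCompactSupport fun x => (‖s x‖ ^ 2 + 2 * divergence d s x) * p x :=
    ((hs_supp.norm.comp_left (g := fun t : ℝ => t ^ 2) (by simp)).add
      (hs_supp.divergence.mul_left (f := fun _ => (2 : ℝ)))).mul_right (f' := p)
  have hsdiv_int := hsdiv_cont.integrable_of_hasCompactSupport (μ := volume) hsdiv_supp
  have hdiv_int := integrable_divergence hps_smooth hps_supp
  have hdiff_int : Integrable fun x => (‖s x‖ ^ 2 + 2 * divergence d s x) * p x
      - 2 * divergence d (fun y => p y • s y) x :=
    hsdiv_int.sub (hdiv_int.const_mul 2)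
  simp_rw [fun x => sq_norm_sub_gradient_log_mul (hp_smooth.differentiable one_ne_zero x)
    (hp_pos x).ne' (hs_smooth.differentiable one_ne_zero x)]
  rw [integral_add hdiff_int h_score_int,
    integral_sub hsdiv_int (hdiv_int.const_mul 2),
    integral_const_mul, integral_divergence_eq_zero hps_smooth hps_supp]
  ring

/-- **The implicit score matching (ISM) identity.** For a positive `C¹` probability density `p`
on `ℝ^d` with square-integrable score (against `p`), and a compactly supported `C¹` vector
field `s`,
`∫ ‖s − ∇log p‖² p = ∫ (‖s‖² + 2 div s) p + ∫ ‖∇log p‖² p`. -/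
theorem implicit_score_matching
    (d : ℕ) (hd : 1 ≤ d)
    (p : EuclideanSpace ℝ (Fin d) → ℝ)
    (hp_smooth : ContDiff ℝ 1 p) (hp_pos : ∀ x, 0 < p x)
    (hp_int : ∫ x, p x = 1)
    (h_score_int :
      Integrable (fun x => ‖gradient (fun y => Real.log (p y)) x‖ ^ 2 * p x))
    (s : EuclideanSpace ℝ (Fin d) → EuclideanSpace ℝ (Fin d))
    (hs_smooth : ContDiff ℝ 1 s) (hs_supp : HasCompactSupport s) :
    ∫ x, ‖s x - gradient (fun y => Real.log (p y)) x‖ ^ 2 * p x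
      = (∫ x, (‖s x‖ ^ 2 + 2 * divergence d s x) * p x)
        + ∫ x, ‖gradient (fun y => Real.log (p y)) x‖ ^ 2 * p x :=
  implicit_score_matching_general d p hp_smooth hp_pos h_score_int s hs_smooth hs_supp
end
end

section
/- Let (β_k)_{k≥1} be a sequence in [0,1], let x ∈ ℝ, and on a probability space let (Z_k)_{k≥1} be a sequence of independent standard real Gaussian random variables. Define X₀ = x and Xₙ = √(1 − βₙ) · Xₙ₋₁ + √βₙ · Zₙ for n ≥ 1. Then for every n ≥ 0, the law of Xₙ is the Gaussian distribution on ℝ with mean x · √ᾱₙ and variance 1 − ᾱₙ, where ᾱₙ = ∏_{k=1}^{n} (1 − β_k). -/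
/-!
`√(1 - βₙ) Xₙ₋₁` is a function of `Z₁, …, Zₙ₋₁`, hence independent of the Gaussian `√βₙ Zₙ`,
and independent Gaussians add with added means and variances. By induction `Xₙ₋₁` has law
`N(x √ᾱₙ₋₁, 1 - ᾱₙ₋₁)`, so `Xₙ` has variance `(1 - βₙ)(1 - ᾱₙ₋₁) + βₙ = 1 - ᾱₙ`.
-/

open MeasureTheory ProbabilityTheory
open scoped NNReal

lemma gaussianReal_map_mul_add_mul_of_indepFun {Ω : Type*} {mΩ : MeasurableSpace Ω}
    {P : Measure Ω} {X Y : Ω → ℝ} {m₁ m₂ : ℝ} {v₁ v₂ : ℝ≥0} (hXY : IndepFun X Y P)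
    (hX : P.map X = gaussianReal m₁ v₁) (hY : P.map Y = gaussianReal m₂ v₂) (a b : ℝ) :
    P.map (fun ω ↦ a * X ω + b * Y ω)
      = gaussianReal (a * m₁ + b * m₂)
          (.mk (a ^ 2) (sq_nonneg _) * v₁ + .mk (b ^ 2) (sq_nonneg _) * v₂) := by
  have hXm : AEMeasurable X P := AEMeasurable.of_map_ne_zero (by simp [NeZero.ne, hX])
  have hYm : AEMeasurable Y P := AEMeasurable.of_map_ne_zero (by simp [NeZero.ne, hY])
  refine gaussianReal_add_gaussianReal_of_indepFun
    (hXY.comp (measurable_const_mul a) (measurable_const_mul b)) ?_ ?_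
  · rw [← gaussianReal_map_const_mul, ← hX,
      AEMeasurable.map_map_of_aemeasurable (measurable_const_mul a).aemeasurable hXm]
    rfl
  · rw [← gaussianReal_map_const_mul, ← hY,
      AEMeasurable.map_map_of_aemeasurable (measurable_const_mul b).aemeasurable hYm]
    rfl

section AffineRecursion

variable {Ω : Type*} {mΩ : MeasurableSpace Ω} {Z X : ℕ → Ω → ℝ} {a b : ℕ → ℝ} {x : ℝ}

lemma measurable_biSup_comap_of_affine_recursion (hX0 : ∀ ω, X 0 ω = x)
    (hX : ∀ n ω, X (n + 1) ω = a n * X n ω + b n * Z (n + 1) ω) (n : ℕ) :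
    Measurable[⨆ k ∈ Set.Iic n, MeasurableSpace.comap (Z k) inferInstance] (X n) := by
  induction n with
  | zero =>
    rw [funext hX0]
    exact measurable_const
  | succ n ih =>
    rw [funext (hX n)]
    refine Measurable.add (Measurable.const_mul ?_ _) (Measurable.const_mul ?_ _)
    · exact ih.mono (biSup_mono fun k hk ↦ Set.mem_Iic.2 (Nat.le_succ_of_le hk)) le_rfl
    · exact (comap_measurable (Z (n + 1))).mono
        (le_iSup₂_of_le (n + 1) (Set.mem_Iic.2 le_rfl) le_rfl) le_rfl

lemma indepFun_of_affine_recursion {P : Measure Ω} (hZ_meas : ∀ k, Measurable (Z k))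
    (hZ_indep : iIndepFun Z P) (hX0 : ∀ ω, X 0 ω = x)
    (hX : ∀ n ω, X (n + 1) ω = a n * X n ω + b n * Z (n + 1) ω) (n : ℕ) :
    IndepFun (X n) (Z (n + 1)) P := by
  have hpast := indep_iSup_of_disjoint (fun k ↦ (hZ_meas k).comap_le) hZ_indep.iIndep
    (S := Set.Iic n) (T := {n + 1}) (by simp)
  rw [iSup_singleton] at hpast
  exact indep_of_indep_of_le_left hpast
    (measurable_biSup_comap_of_affine_recursion hX0 hX n).comap_le

end AffineRecursion

/-- **Law of the discrete variance-preserving (DDPM) noising recursion.** If `β_k ∈ [0,1]`,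
`(Z_k)` are i.i.d. standard Gaussians, `X₀ = x` and
`Xₙ = √(1 − βₙ) Xₙ₋₁ + √βₙ Zₙ`, then `Xₙ ∼ N(x √ᾱₙ, 1 − ᾱₙ)` with
`ᾱₙ = ∏_{k=1}^n (1 − β_k)`. -/
theorem vp_discrete_noising_law
    (β : ℕ → ℝ) (hβ : ∀ k, β k ∈ Set.Icc (0 : ℝ) 1) (x : ℝ)
    (Ω : Type*) [MeasureSpace Ω] [IsProbabilityMeasure (ℙ : Measure Ω)]
    (Z : ℕ → Ω → ℝ) (hZ_meas : ∀ k, Measurable (Z k))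
    (hZ_indep : iIndepFun Z ℙ)
    (hZ_gauss : ∀ k, (ℙ : Measure Ω).map (Z k) = gaussianReal 0 1)
    (X : ℕ → Ω → ℝ)
    (hX0 : ∀ ω, X 0 ω = x)
    (hX : ∀ n ω, X (n + 1) ω
      = Real.sqrt (1 - β (n + 1)) * X n ω + Real.sqrt (β (n + 1)) * Z (n + 1) ω) :
    ∀ n, (ℙ : Measure Ω).map (X n)
      = gaussianReal (x * Real.sqrt (∏ k ∈ Finset.range n, (1 - β (k + 1))))
          (Real.toNNReal (1 - ∏ k ∈ Finset.range n, (1 - β (k + 1)))) := by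
  intro n
  induction n with
  | zero => simp [funext hX0, gaussianReal_zero_var]
  | succ n ih =>
    rw [funext (hX n), gaussianReal_map_mul_add_mul_of_indepFun
      (indepFun_of_affine_recursion hZ_meas hZ_indep hX0 hX n) ih (hZ_gauss _),
      Finset.prod_range_succ]
    have hᾱ₀ : 0 ≤ ∏ k ∈ Finset.range n, (1 - β (k + 1)) :=
      Finset.prod_nonneg fun k _ ↦ sub_nonneg.2 (hβ (k + 1)).2
    have hᾱ₁ : ∏ k ∈ Finset.range n, (1 - β (k + 1)) ≤ 1 :=
      Finset.prod_le_one (fun k _ ↦ sub_nonneg.2 (hβ (k + 1)).2)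
        fun k _ ↦ sub_le_self _ (hβ (k + 1)).1
    generalize ∏ k ∈ Finset.range n, (1 - β (k + 1)) = ᾱ at hᾱ₀ hᾱ₁ ⊢
    obtain ⟨hβ₀, hβ₁⟩ := hβ (n + 1)
    congr 1
    · rw [Real.sqrt_mul hᾱ₀]
      ring
    · ext
      simp only [NNReal.coe_add, NNReal.coe_mul, NNReal.coe_mk, NNReal.coe_one,
        Real.coe_toNNReal _ (sub_nonneg.2 hᾱ₁), Real.sq_sqrt (sub_nonneg.2 hβ₁),
        Real.sq_sqrt hβ₀, Real.coe_toNNReal _ (by nlinarith : 0 ≤ 1 - ᾱ * (1 - β (n + 1)))]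
      ring
end
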